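/- arXiv:1111.1549 — 4 statements merged into one kernel-verified Lean document; each statement's English description precedes it below -/
import Mathlib

section
/- Let V = W ⊕ ℝ be a finite-dimensional real vector space, Λ = ℝ₊·λ ⊆ ℝ a ray spanned by a nonzero vector λ, S ⊆ W a linear subspace, K₁ a convex cone in V, and K₂ = S ⊕ Λ. Then K₁ and K₂ cannot be separated by a nonzero linear functional if and only if there exists a vector k ∈ K₁ ∩ K₂ and vectors e₁,…,e_m ∈ W such that span{e₁,…,e_m, S} = W and k ± eᵢ ∈ K₁ for all i (where eᵢ is identified with (eᵢ, 0) ∈ W ⊕ ℝ). -/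
/-!
If `K₁` and `K₂` cannot be separated, the convex cone `K₁ - K₂` is the whole space: a proper
convex cone in finite dimension lies in a closed half-space (if it has interior, Hahn–Banach at a
point outside it; otherwise it spans a proper subspace). So for a basis `wⱼ` of `W` we can write
`aⱼ⁺ = pⱼ⁺ + wⱼ` and `aⱼ⁻ = pⱼ⁻ - wⱼ` with `aⱼ^± ∈ K₁`, `pⱼ^± ∈ K₂`. For `k₀ ∈ K₁ ∩ K₂` the point
`k = c • k₀ + ∑ⱼ (aⱼ⁺ + aⱼ⁻)` lies in `K₁ ∩ K₂`, and `eⱼ = aⱼ⁺ - aⱼ⁻ - αⱼ • k₀`, with `αⱼ` chosen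
to kill the `ℝ`-component, lies in `2 • wⱼ + S` and satisfies `k ± eⱼ ∈ K₁` as soon as `c > |αⱼ|`.

Conversely, a separating functional attains its minimum over `K₁` and its maximum over `K₂` at
`k ∈ K₁ ∩ K₂`, hence vanishes on every `v` with `k ± v ∈ K₁` or `k ± v ∈ K₂`; these span `W × ℝ`.
-/

open Set Submodule
open scoped Pointwise

namespace ConvexCone

variable {V : Type*}

def ofConvex [AddCommGroup V] [Module ℝ V] {s : Set V} (hs : Convex ℝ s)
    (hsmul : ∀ x ∈ s, ∀ t : ℝ, 0 < t → t • x ∈ s) : ConvexCone ℝ V where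
  carrier := s
  smul_mem' _ hc _ hx := hsmul _ hx _ hc
  add_mem' x hx y hy := by
    have hmid := hs hx hy (by norm_num : (0 : ℝ) ≤ 1 / 2) (by norm_num : (0 : ℝ) ≤ 1 / 2)
      (by norm_num)
    convert hsmul _ hmid 2 two_pos using 1
    module

theorem exists_strongDual_ne_zero_nonpos_of_ne_univ [NormedAddCommGroup V] [NormedSpace ℝ V]
    [FiniteDimensional ℝ V] [Nontrivial V] (C : ConvexCone ℝ V) (hC : (C : Set V) ≠ univ) :
    ∃ f : StrongDual ℝ V, f ≠ 0 ∧ ∀ x ∈ C, f x ≤ 0 := by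
  rcases (interior (C : Set V)).eq_empty_or_nonempty with hint | hint
  · have hspan : vectorSpan ℝ (C : Set V) < ⊤ := by
      refine lt_top_iff_ne_top.2 fun htop => ?_
      have hne : (C : Set V).Nonempty := by
        refine nonempty_iff_ne_empty.2 fun hempty => ?_
        rw [hempty, vectorSpan_empty] at htop
        exact bot_ne_top htop
      rw [← AffineSubspace.affineSpan_eq_top_iff_vectorSpan_eq_top_of_nonempty ℝ V V hne,
        ← C.convex.interior_nonempty_iff_affineSpan_eq_top, hint] at htop
      exact not_nonempty_empty htop
    obtain ⟨f, hf, hker⟩ := exists_le_ker_of_lt_top _ hspan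
    refine ⟨LinearMap.toContinuousLinearMap f,
      (LinearEquiv.map_ne_zero_iff _).2 hf, fun x hx => le_of_eq ?_⟩
    -- a cone lies in its vector span: `x = 2 • x -ᵥ x`
    have hx' : x ∈ vectorSpan ℝ (C : Set V) := by
      simpa [two_smul] using vsub_mem_vectorSpan ℝ (C.smul_mem two_pos hx) hx
    exact hker hx'
  · obtain ⟨x₀, hx₀⟩ := (ne_univ_iff_exists_notMem _).1 hC
    obtain ⟨f, hf, hle⟩ := geometric_hahn_banach_of_nonempty_interior_point C.convex
      (fun h => hx₀ (interior_subset h)) hint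
    refine ⟨f, hf, fun x hx => not_lt.1 fun hpos => ?_⟩
    have hscaled := hle _ (C.smul_mem (div_pos (by positivity : 0 < |f x₀| + 1) hpos) hx)
    rw [map_smul, smul_eq_mul, div_mul_cancel₀ _ hpos.ne'] at hscaled
    linarith [le_abs_self (f x₀)]

theorem exists_ne_zero_nonpos_of_ne_univ [AddCommGroup V] [Module ℝ V] [FiniteDimensional ℝ V]
    [Nontrivial V] (C : ConvexCone ℝ V) (hC : (C : Set V) ≠ univ) :
    ∃ f : V →ₗ[ℝ] ℝ, f ≠ 0 ∧ ∀ x ∈ C, f x ≤ 0 := by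
  let e := (Module.finBasis ℝ V).equivFun
  have : Nontrivial (Fin (Module.finrank ℝ V) → ℝ) := e.injective.nontrivial
  have hC' : (C.comap e.symm.toLinearMap : Set (Fin (Module.finrank ℝ V) → ℝ)) ≠ univ :=
    fun h => hC <| eq_univ_of_forall fun x => by
      have hx : e x ∈ (C.comap e.symm.toLinearMap : Set (Fin (Module.finrank ℝ V) → ℝ)) :=
        h ▸ mem_univ (e x)
      simpa using hx
  obtain ⟨f, hf, hle⟩ :=
    (C.comap e.symm.toLinearMap).exists_strongDual_ne_zero_nonpos_of_ne_univ hC'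
  refine ⟨(f : _ →ₗ[ℝ] ℝ) ∘ₗ e.toLinearMap, fun h0 => hf ?_,
    fun x hx => hle _ (by simpa using hx)⟩
  ext y
  simpa using LinearMap.congr_fun h0 (e.symm y)

theorem exists_separating_of_sub_ne_univ [AddCommGroup V] [Module ℝ V] [FiniteDimensional ℝ V]
    [Nontrivial V] (C₁ C₂ : ConvexCone ℝ V) (h : (C₁ : Set V) - (C₂ : Set V) ≠ univ) :
    ∃ φ : V →ₗ[ℝ] ℝ, φ ≠ 0 ∧ ∀ x ∈ C₁, ∀ y ∈ C₂, φ y ≤ φ x := by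
  have hD : ((C₁ + C₂.map (-LinearMap.id) : ConvexCone ℝ V) : Set V) =
      (C₁ : Set V) - (C₂ : Set V) := by
    ext v
    simp only [SetLike.mem_coe, mem_add, mem_map, mem_sub]
    constructor
    · rintro ⟨x, hx, _, ⟨y, hy, rfl⟩, rfl⟩
      exact ⟨x, hx, y, hy, by simp [sub_eq_add_neg]⟩
    · rintro ⟨x, hx, y, hy, rfl⟩
      exact ⟨x, hx, -y, ⟨y, hy, rfl⟩, by simp [sub_eq_add_neg]⟩
  obtain ⟨f, hf, hle⟩ := (C₁ + C₂.map (-LinearMap.id)).exists_ne_zero_nonpos_of_ne_univ (hD ▸ h)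
  refine ⟨-f, neg_ne_zero.2 hf, fun x hx y hy => ?_⟩
  have hxy : x - y ∈ ((C₁ + C₂.map (-LinearMap.id) : ConvexCone ℝ V) : Set V) :=
    hD ▸ mem_sub.2 ⟨x, hx, y, hy, rfl⟩
  have hfxy := hle (x - y) hxy
  simp only [map_sub, LinearMap.neg_apply] at hfxy ⊢
  linarith

theorem add_sum_mem [AddCommMonoid V] [Module ℝ V] (C : ConvexCone ℝ V) {ι : Type*}
    {s : Finset ι} {x : V} {f : ι → V} (hx : x ∈ C) (hf : ∀ i ∈ s, f i ∈ C) :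
    x + ∑ i ∈ s, f i ∈ C := by
  classical
  induction s using Finset.induction_on generalizing x with
  | empty => simpa using hx
  | insert j s hj ih =>
    rw [Finset.sum_insert hj, ← add_assoc]
    exact ih (add_mem hx (hf j (Finset.mem_insert_self j s)))
      fun i hi => hf i (Finset.mem_insert_of_mem hi)

theorem smul_add_sum_add_mem [AddCommGroup V] [Module ℝ V] (C : ConvexCone ℝ V)
    {ι : Type*} [Fintype ι] {k : V} {a b : ι → V} (hk : k ∈ C)
    (ha : ∀ i, a i ∈ C) (hb : ∀ i, b i ∈ C) {c α : ℝ} (hα : |α| < c) (i : ι) :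
    c • k + ∑ j, (a j + b j) + (a i - b i - α • k) ∈ C := by
  classical
  have hsplit : c • k + ∑ j, (a j + b j) + (a i - b i - α • k) =
      ((c - α) • k + (2 : ℝ) • a i) + ∑ j ∈ Finset.univ.erase i, (a j + b j) := by
    rw [← Finset.add_sum_erase _ _ (Finset.mem_univ i)]
    module
  rw [hsplit]
  have hcα : 0 < c - α := sub_pos.2 ((le_abs_self α).trans_lt hα)
  exact C.add_sum_mem (add_mem (C.smul_mem hcα hk) (C.smul_mem two_pos (ha i)))
    fun j _ => add_mem (ha j) (hb j)

theorem smul_add_sum_sub_mem [AddCommGroup V] [Module ℝ V] (C : ConvexCone ℝ V)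
    {ι : Type*} [Fintype ι] {k : V} {a b : ι → V} (hk : k ∈ C)
    (ha : ∀ i, a i ∈ C) (hb : ∀ i, b i ∈ C) {c α : ℝ} (hα : |α| < c) (i : ι) :
    c • k + ∑ j, (a j + b j) - (a i - b i - α • k) ∈ C := by
  convert C.smul_add_sum_add_mem hk hb ha (α := -α) (by rwa [abs_neg]) i using 1
  rw [Finset.sum_congr rfl fun j _ => add_comm (b j) (a j)]
  module

end ConvexCone

theorem Submodule.span_range_sup_eq_top_of_sub_smul_mem {K W ι : Type*} [Field K]
    [AddCommGroup W] [Module K W] {w : ι → W} (hw : span K (range w) = ⊤) {S : Submodule K W}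
    {e : ι → W} {c : K} (hc : c ≠ 0) (h : ∀ i, e i - c • w i ∈ S) :
    span K (range e) ⊔ S = ⊤ := by
  rw [eq_top_iff, ← hw, span_le]
  rintro _ ⟨i, rfl⟩
  have hwi : w i = c⁻¹ • (e i - (e i - c • w i)) := by
    rw [sub_sub_cancel, smul_smul, inv_mul_cancel₀ hc, one_smul]
  rw [SetLike.mem_coe, hwi]
  exact smul_mem _ _ (sub_mem (mem_sup_left (subset_span ⟨i, rfl⟩)) (mem_sup_right (h i)))

theorem LinearMap.map_eq_zero_of_add_mem_of_sub_mem {R V : Type*} [CommRing R] [LinearOrder R]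
    [IsStrictOrderedRing R] [AddCommGroup V] [Module R V] {φ : V →ₗ[R] R} {K : Set V} {k v : V}
    (hmin : ∀ x ∈ K, φ k ≤ φ x) (hadd : k + v ∈ K) (hsub : k - v ∈ K) : φ v = 0 := by
  have h₁ := hmin _ hadd
  have h₂ := hmin _ hsub
  rw [map_add] at h₁
  rw [map_sub] at h₂
  linarith

namespace Submodule

variable {W : Type*} [AddCommGroup W] [Module ℝ W]

/-- The cone `K₂ = S ⊕ Λ`, `Λ = ℝ₊·λ`. -/
def prodRay (S : Submodule ℝ W) (lam : ℝ) : ConvexCone ℝ (W × ℝ) where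
  carrier := {x : W × ℝ | ∃ s ∈ S, ∃ t : ℝ, 0 < t ∧ x = (s, t * lam)}
  smul_mem' c hc _ := by
    rintro ⟨s, hs, t, ht, rfl⟩
    exact ⟨c • s, S.smul_mem c hs, c * t, mul_pos hc ht, by simp [mul_assoc]⟩
  add_mem' _ := by
    rintro ⟨s, hs, t, ht, rfl⟩ _ ⟨s', hs', t', ht', rfl⟩
    exact ⟨s + s', S.add_mem hs hs', t + t', add_pos ht ht', by simp [add_mul]⟩

theorem fst_mem_of_mem_prodRay {S : Submodule ℝ W} {lam : ℝ} {x : W × ℝ}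
    (hx : x ∈ S.prodRay lam) : x.1 ∈ S := by
  obtain ⟨s, hs, t, -, rfl⟩ := hx
  exact hs

theorem snd_ne_zero_of_mem_prodRay {S : Submodule ℝ W} {lam : ℝ} (hlam : lam ≠ 0) {x : W × ℝ}
    (hx : x ∈ S.prodRay lam) : x.2 ≠ 0 := by
  obtain ⟨s, -, t, ht, rfl⟩ := hx
  exact mul_ne_zero ht.ne' hlam

theorem exists_mem_inter_prodRay_of_sub_eq_univ [FiniteDimensional ℝ W] {lam : ℝ}
    (hlam : lam ≠ 0) {S : Submodule ℝ W} (C : ConvexCone ℝ (W × ℝ))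
    (hcover : (C : Set (W × ℝ)) - (S.prodRay lam : Set (W × ℝ)) = univ) :
    ∃ k ∈ (C : Set (W × ℝ)) ∩ S.prodRay lam, ∃ (m : ℕ) (e : Fin m → W),
      span ℝ (range e) ⊔ S = ⊤ ∧ ∀ i, k + (e i, (0 : ℝ)) ∈ C ∧ k - (e i, (0 : ℝ)) ∈ C := by
  choose x hx y hy hxy using fun v => mem_sub.1 (hcover ▸ mem_univ v)
  replace hxy : ∀ v, x v = v + y v := fun v => sub_eq_iff_eq_add.1 (hxy v)
  obtain ⟨k₀, hk₀C, hk₀⟩ : ∃ k₀ ∈ C, k₀ ∈ S.prodRay lam :=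
    ⟨x 0, hx 0, by rw [hxy 0, zero_add]; exact hy 0⟩
  have hk₀₂ : k₀.2 ≠ 0 := snd_ne_zero_of_mem_prodRay hlam hk₀
  let w := Module.finBasis ℝ W
  let a := fun j => x (w j, 0)
  let b := fun j => x (-(w j, 0))
  let α := fun j => (a j - b j).2 / k₀.2
  let c := 1 + ∑ j, |α j|
  have hαc : ∀ j, |α j| < c := fun j => by
    have := Finset.single_le_sum (fun i _ => abs_nonneg (α i)) (Finset.mem_univ j)
    simp only [c]
    linarith
  have he : ∀ j, (((a j - b j - α j • k₀).1, (0 : ℝ)) : W × ℝ) = a j - b j - α j • k₀ :=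
    fun j => Prod.ext rfl (by simp [α, div_mul_cancel₀ _ hk₀₂])
  refine ⟨c • k₀ + ∑ j, (a j + b j), ⟨?_, ?_⟩, _, fun j => (a j - b j - α j • k₀).1, ?_,
    fun i => ?_⟩
  · exact C.add_sum_mem (C.smul_mem (by positivity) hk₀C) fun j _ => add_mem (hx _) (hx _)
  · refine (S.prodRay lam).add_sum_mem ((S.prodRay lam).smul_mem (by positivity) hk₀)
      fun j _ => ?_
    have hab : a j + b j = y (w j, 0) + y (-(w j, 0)) := by
      simp only [a, b, hxy]
      abel
    exact hab ▸ add_mem (hy _) (hy _)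
  · refine span_range_sup_eq_top_of_sub_smul_mem w.span_eq two_ne_zero fun j => ?_
    have hej : (a j - b j - α j • k₀).1 - (2 : ℝ) • w j =
        (y (w j, 0)).1 - (y (-(w j, 0))).1 - α j • k₀.1 := by
      simp only [a, b, hxy, Prod.fst_sub, Prod.fst_add, Prod.fst_neg, Prod.smul_fst]
      module
    rw [hej]
    exact sub_mem (sub_mem (fst_mem_of_mem_prodRay (hy _)) (fst_mem_of_mem_prodRay (hy _)))
      (smul_mem _ _ (fst_mem_of_mem_prodRay hk₀))
  · rw [he i]
    exact ⟨C.smul_add_sum_add_mem hk₀C (fun j => hx _) (fun j => hx _) (hαc i) i,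
      C.smul_add_sum_sub_mem hk₀C (fun j => hx _) (fun j => hx _) (hαc i) i⟩

theorem eq_zero_of_separates_prodRay {lam : ℝ} (hlam : lam ≠ 0) {S : Submodule ℝ W}
    {K : Set (W × ℝ)} {k : W × ℝ} (hkK : k ∈ K) (hk : k ∈ S.prodRay lam) {ι : Type*}
    {e : ι → W} (hspan : span ℝ (range e) ⊔ S = ⊤)
    (hpm : ∀ i, k + (e i, (0 : ℝ)) ∈ K ∧ k - (e i, (0 : ℝ)) ∈ K) {φ : W × ℝ →ₗ[ℝ] ℝ}
    (hsep : ∀ x ∈ K, ∀ y ∈ S.prodRay lam, φ y ≤ φ x) : φ = 0 := by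
  have hmin : ∀ x ∈ K, φ k ≤ φ x := fun x hx => hsep x hx k hk
  have hmax : ∀ y ∈ S.prodRay lam, (-φ) k ≤ (-φ) y := fun y hy => by
    simpa using hsep k hkK y hy
  obtain ⟨s₀, hs₀, t₀, ht₀, rfl⟩ := hk
  have hS : S ≤ LinearMap.ker (φ ∘ₗ LinearMap.inl ℝ W ℝ) := fun s hs =>
    LinearMap.mem_ker.2 <| show φ (s, 0) = 0 from neg_eq_zero.1 <|
      LinearMap.map_eq_zero_of_add_mem_of_sub_mem (v := (s, 0)) hmax
        ⟨s₀ + s, add_mem hs₀ hs, t₀, ht₀, by simp⟩ ⟨s₀ - s, sub_mem hs₀ hs, t₀, ht₀, by simp⟩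
  have he : span ℝ (range e) ≤ LinearMap.ker (φ ∘ₗ LinearMap.inl ℝ W ℝ) :=
    span_le.2 <| range_subset_iff.2 fun i => LinearMap.mem_ker.2
      (LinearMap.map_eq_zero_of_add_mem_of_sub_mem hmin (hpm i).1 (hpm i).2 : φ (e i, 0) = 0)
  have hray : φ (0, t₀ / 2 * lam) = 0 :=
    neg_eq_zero.1 <| LinearMap.map_eq_zero_of_add_mem_of_sub_mem hmax
      ⟨s₀, hs₀, t₀ + t₀ / 2, by positivity, by ext <;> simp; ring⟩
      ⟨s₀, hs₀, t₀ / 2, by positivity, by ext <;> simp; ring⟩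
  refine LinearMap.prod_ext ?_ (LinearMap.ext_ring ?_)
  · exact LinearMap.ker_eq_top.1 (top_le_iff.1 (hspan ▸ sup_le he hS))
  · have : ((0 : W), t₀ / 2 * lam) = (t₀ / 2 * lam) • ((0 : W), (1 : ℝ)) := by simp
    rw [this, map_smul, smul_eq_mul] at hray
    simpa [mul_ne_zero (by positivity : t₀ / 2 ≠ 0) hlam] using hray

end Submodule

/-- Geometric characterisation of non-separability: in `V = W ⊕ ℝ` with `Λ = ℝ₊·λ`,
`S ⊆ W` a linear subspace, `K₁` a convex cone and `K₂ = S ⊕ Λ`, the cones `K₁` and `K₂`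
cannot be separated by a nonzero linear functional iff there are `k ∈ K₁ ∩ K₂` and
vectors `e₁,…,e_m ∈ W` with `span{e₁,…,e_m, S} = W` and `k ± eᵢ ∈ K₁` for all `i`. -/
theorem stmt5 {W : Type*} [AddCommGroup W] [Module ℝ W] [FiniteDimensional ℝ W]
    (lam : ℝ) (hlam : lam ≠ 0) (S : Submodule ℝ W)
    (K₁ : Set (W × ℝ)) (hconv : Convex ℝ K₁)
    (hcone : ∀ k ∈ K₁, ∀ t : ℝ, 0 < t → t • k ∈ K₁) :
    (¬ ∃ φ : W × ℝ →ₗ[ℝ] ℝ, φ ≠ 0 ∧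
        ∀ k₁ ∈ K₁, ∀ s ∈ S, ∀ t : ℝ, 0 < t → φ (s, t * lam) ≤ φ k₁) ↔
      ∃ k ∈ K₁ ∩ {x : W × ℝ | ∃ s ∈ S, ∃ t : ℝ, 0 < t ∧ x = (s, t * lam)},
        ∃ (m : ℕ) (e : Fin m → W),
          Submodule.span ℝ (Set.range e) ⊔ S = ⊤ ∧
          ∀ i, k + (e i, (0 : ℝ)) ∈ K₁ ∧ k - (e i, (0 : ℝ)) ∈ K₁ := by
  constructor
  · intro hns
    refine S.exists_mem_inter_prodRay_of_sub_eq_univ hlam (ConvexCone.ofConvex hconv hcone) ?_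
    by_contra hne
    obtain ⟨φ, hφ, hsep⟩ := ConvexCone.exists_separating_of_sub_ne_univ _ _ hne
    exact hns ⟨φ, hφ, fun k₁ hk₁ s hs t ht => hsep k₁ hk₁ _ ⟨s, hs, t, ht, rfl⟩⟩
  · rintro ⟨k, ⟨hk₁, hk₂⟩, m, e, hspan, hpm⟩ ⟨φ, hφ, hsep⟩
    refine hφ (Submodule.eq_zero_of_separates_prodRay hlam hk₁ hk₂ hspan hpm ?_)
    rintro x hx _ ⟨s, hs, t, ht, rfl⟩
    exact hsep x hx s hs t ht
end

section
/- Let a : [0,1] → ℝ be bounded and measurable, h : [0,1] → [0,1] continuous, and g : [0,1] → [0,1] a C¹ map with nowhere-vanishing derivative. Then the function G(s) := ∫₀¹ |a(g(t)·h(s)) − a(g(t)·h(s₀))| dt is continuous at every point s₀ ∈ [0,1] with h(s₀) ≠ 0. -/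
/-!
Truncating `a` outside `[-1, 1]` makes it integrable without changing `G`, and the claim becomes
continuity at `c₀ = h s₀ ≠ 0` of `c ↦ ∫₀¹ |f (g t * c) - f (g t * c₀)| dt` for an integrable `f`.
For continuous compactly supported `f` this is dominated convergence. In general, approximate `f`
in `L¹` by such a `φ`: since `t ↦ g t * c` is injective with `|(g t * c)'| ≥ m |c|`, the change of
variables formula bounds `∫₀¹ |(f - φ) (g t * c)| dt` by `‖f - φ‖₁ / (m |c|)`, uniformly for `c`
near `c₀`.
-/

open MeasureTheory Set Filter Topology
open scoped ENNReal

theorem Set.OrdConnected.injOn_of_hasDerivAt_ne_zero {s : Set ℝ} (hs : s.OrdConnected)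
    {g g' : ℝ → ℝ} (hg : ∀ x ∈ s, HasDerivAt g (g' x) x) (hg' : ∀ x ∈ s, g' x ≠ 0) :
    InjOn g s := by
  suffices H : ∀ x ∈ s, ∀ y ∈ s, x < y → g x ≠ g y by
    intro x hx y hy hxy
    by_contra hne
    rcases lt_or_gt_of_ne hne with hlt | hgt
    · exact H x hx y hy hlt hxy
    · exact H y hy x hx hgt hxy.symm
  intro x hx y hy hxy hgxy
  have hsub : Icc x y ⊆ s := hs.out hx hy
  obtain ⟨c, hc, hslope⟩ := exists_hasDerivAt_eq_slope g g' hxy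
    (fun z hz => (hg z (hsub hz)).continuousAt.continuousWithinAt)
    (fun z hz => hg z (hsub (Ioo_subset_Icc_self hz)))
  rw [hgxy, sub_self, zero_div] at hslope
  exact hg' c (hsub (Ioo_subset_Icc_self hc)) hslope

theorem tendsto_integral_abs_comp_mul_sub_of_continuous {α : Type*} [MeasurableSpace α]
    {μ : Measure α} [IsFiniteMeasure μ] {g : α → ℝ} (hg : AEMeasurable g μ) {φ : ℝ → ℝ}
    (hφ : Continuous φ) {C : ℝ} (hC : ∀ y, |φ y| ≤ C) (c₀ : ℝ) :
    Tendsto (fun c => ∫ x, |φ (g x * c) - φ (g x * c₀)| ∂μ) (𝓝 c₀) (𝓝 0) := by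
  have hmeas : ∀ c, AEStronglyMeasurable (fun x => φ (g x * c)) μ := fun c =>
    (hφ.measurable.comp_aemeasurable (hg.mul_const c)).aestronglyMeasurable
  have hlim : ∀ x, Tendsto (fun c => |φ (g x * c) - φ (g x * c₀)|) (𝓝 c₀) (𝓝 0) := fun x => by
    have hcont : Continuous fun c => |φ (g x * c) - φ (g x * c₀)| := by fun_prop
    simpa using hcont.tendsto c₀
  simpa using tendsto_integral_filter_of_dominated_convergence (fun _ => 2 * C)
    (Eventually.of_forall fun c => ((hmeas c).sub (hmeas c₀)).norm)
    (Eventually.of_forall fun c => Eventually.of_forall fun x => by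
      simp only [Pi.sub_apply, Real.norm_eq_abs, abs_abs]
      linarith [abs_sub (φ (g x * c)) (φ (g x * c₀)), hC (g x * c), hC (g x * c₀)])
    (integrable_const _) (Eventually.of_forall hlim)

theorem integral_abs_sub_le_add_add {α : Type*} [MeasurableSpace α] {μ : Measure α}
    {F₁ F₂ P₁ P₂ : α → ℝ} (hF₁ : Integrable F₁ μ) (hF₂ : Integrable F₂ μ)
    (hP₁ : Integrable P₁ μ) (hP₂ : Integrable P₂ μ) :
    ∫ x, |F₁ x - F₂ x| ∂μ ≤
      (∫ x, |F₁ x - P₁ x| ∂μ) + (∫ x, |P₁ x - P₂ x| ∂μ) + ∫ x, |F₂ x - P₂ x| ∂μ := by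
  have h₁ : Integrable (fun x => |F₁ x - P₁ x|) μ := (hF₁.sub hP₁).abs
  have h₂ : Integrable (fun x => |P₁ x - P₂ x|) μ := (hP₁.sub hP₂).abs
  have h₃ : Integrable (fun x => |F₂ x - P₂ x|) μ := (hF₂.sub hP₂).abs
  calc ∫ x, |F₁ x - F₂ x| ∂μ
      ≤ ∫ x, (|F₁ x - P₁ x| + |P₁ x - P₂ x| + |F₂ x - P₂ x|) ∂μ :=
        integral_mono (hF₁.sub hF₂).abs ((h₁.add h₂).add h₃) fun x => by
          linarith [abs_sub_le (F₁ x) (P₁ x) (F₂ x), abs_sub_le (P₁ x) (P₂ x) (F₂ x),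
            abs_sub_comm (F₂ x) (P₂ x)]
    _ = _ := by
        rw [integral_add (f := fun x => |F₁ x - P₁ x| + |P₁ x - P₂ x|) (h₁.add h₂) h₃,
          integral_add h₁ h₂]

section ChangeOfVariables

variable {S : Set ℝ} {g g' : ℝ → ℝ} {m : ℝ}

theorem ofReal_mul_setLIntegral_comp_le (hS : MeasurableSet S)
    (hg : ∀ x ∈ S, HasDerivWithinAt g (g' x) S x) (hinj : InjOn g S)
    (hm : ∀ x ∈ S, m ≤ |g' x|) (u : ℝ → ℝ≥0∞) :
    ENNReal.ofReal m * ∫⁻ x in S, u (g x) ≤ ∫⁻ y, u y :=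
  calc ENNReal.ofReal m * ∫⁻ x in S, u (g x)
      = ∫⁻ x in S, ENNReal.ofReal m * u (g x) :=
        (lintegral_const_mul' _ _ ENNReal.ofReal_ne_top).symm
    _ ≤ ∫⁻ x in S, ENNReal.ofReal |g' x| * u (g x) :=
        setLIntegral_mono' hS fun x hx => by gcongr; exact hm x hx
    _ = ∫⁻ y in g '' S, u y := (lintegral_image_eq_lintegral_abs_deriv_mul hS hg hinj u).symm
    _ ≤ ∫⁻ y, u y := setLIntegral_le_lintegral _ _

theorem integrableOn_comp_of_le_abs_deriv (hS : MeasurableSet S)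
    (hg : ∀ x ∈ S, HasDerivWithinAt g (g' x) S x) (hinj : InjOn g S) (hm0 : 0 < m)
    (hm : ∀ x ∈ S, m ≤ |g' x|) {u : ℝ → ℝ} (hum : Measurable u) (hu : Integrable u) :
    IntegrableOn (fun x => u (g x)) S := by
  have hgm : AEMeasurable g (volume.restrict S) :=
    ContinuousOn.aemeasurable (fun x hx => (hg x hx).continuousWithinAt) hS
  refine ⟨(hum.comp_aemeasurable hgm).aestronglyMeasurable, ?_⟩
  have hle := ofReal_mul_setLIntegral_comp_le hS hg hinj hm (fun y => ‖u y‖ₑ)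
  refine lt_top_iff_ne_top.2 fun htop => ?_
  rw [htop, ENNReal.mul_top (ENNReal.ofReal_pos.2 hm0).ne'] at hle
  exact hu.hasFiniteIntegral.ne (top_le_iff.1 hle)

theorem mul_setIntegral_abs_comp_le (hS : MeasurableSet S)
    (hg : ∀ x ∈ S, HasDerivWithinAt g (g' x) S x) (hinj : InjOn g S) (hm0 : 0 ≤ m)
    (hm : ∀ x ∈ S, m ≤ |g' x|) {u : ℝ → ℝ} (hum : Measurable u) (hu : Integrable u) :
    m * ∫ x in S, |u (g x)| ≤ ∫ y, |u y| := by
  have hgm : AEMeasurable g (volume.restrict S) :=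
    ContinuousOn.aemeasurable (fun x hx => (hg x hx).continuousWithinAt) hS
  simp only [← Real.norm_eq_abs]
  rw [integral_norm_eq_lintegral_enorm (f := fun x => u (g x))
      (hum.comp_aemeasurable hgm).aestronglyMeasurable,
    integral_norm_eq_lintegral_enorm hu.aestronglyMeasurable,
    ← ENNReal.toReal_ofReal hm0, ← ENNReal.toReal_mul]
  exact ENNReal.toReal_mono hu.hasFiniteIntegral.ne
    (ofReal_mul_setLIntegral_comp_le hS hg hinj hm (fun y => ‖u y‖ₑ))

theorem integrableOn_comp_mul_of_le_abs_deriv (hS : MeasurableSet S)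
    (hg : ∀ x ∈ S, HasDerivWithinAt g (g' x) S x) (hinj : InjOn g S) (hm0 : 0 < m)
    (hm : ∀ x ∈ S, m ≤ |g' x|) {u : ℝ → ℝ} (hum : Measurable u) (hu : Integrable u)
    {c : ℝ} (hc : c ≠ 0) :
    IntegrableOn (fun x => u (g x * c)) S :=
  integrableOn_comp_of_le_abs_deriv hS (fun x hx => (hg x hx).mul_const c)
    (fun _ hx _ hy hxy => hinj hx hy (mul_right_cancel₀ hc hxy))
    (mul_pos hm0 (abs_pos.2 hc)) (fun x hx => by rw [abs_mul]; gcongr; exact hm x hx) hum hu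

theorem mul_setIntegral_abs_comp_mul_le (hS : MeasurableSet S)
    (hg : ∀ x ∈ S, HasDerivWithinAt g (g' x) S x) (hinj : InjOn g S) (hm0 : 0 ≤ m)
    (hm : ∀ x ∈ S, m ≤ |g' x|) {u : ℝ → ℝ} (hum : Measurable u) (hu : Integrable u)
    {c : ℝ} (hc : c ≠ 0) :
    m * |c| * ∫ x in S, |u (g x * c)| ≤ ∫ y, |u y| :=
  mul_setIntegral_abs_comp_le hS (fun x hx => (hg x hx).mul_const c)
    (fun _ hx _ hy hxy => hinj hx hy (mul_right_cancel₀ hc hxy))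
    (by positivity) (fun x hx => by rw [abs_mul]; gcongr; exact hm x hx) hum hu

theorem tendsto_setIntegral_abs_comp_mul_sub (hS : MeasurableSet S) (hSfin : volume S ≠ ∞)
    (hg : ∀ x ∈ S, HasDerivWithinAt g (g' x) S x) (hinj : InjOn g S) (hm0 : 0 < m)
    (hm : ∀ x ∈ S, m ≤ |g' x|) {f : ℝ → ℝ} (hfm : Measurable f) (hf : Integrable f)
    {c₀ : ℝ} (hc₀ : c₀ ≠ 0) :
    Tendsto (fun c => ∫ x in S, |f (g x * c) - f (g x * c₀)|) (𝓝 c₀) (𝓝 0) := by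
  have : IsFiniteMeasure (volume.restrict S) := isFiniteMeasure_restrict.2 hSfin
  rw [Metric.tendsto_nhds]
  intro ε hε
  have hc₀pos : 0 < |c₀| := abs_pos.2 hc₀
  -- with this tolerance both change-of-variables error terms are small once `|c| > |c₀| / 2`
  obtain ⟨φ, hφsupp, hφclose, hφ, hφi⟩ :=
    hf.exists_hasCompactSupport_integral_sub_le (show 0 < m * |c₀| * ε / 8 by positivity)
  obtain ⟨C, hC⟩ := hφsupp.exists_bound_of_continuous hφ
  have hgm : AEMeasurable g (volume.restrict S) :=
    ContinuousOn.aemeasurable (fun x hx => (hg x hx).continuousWithinAt) hS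
  have hφnear : ∀ᶠ c in 𝓝 c₀, ∫ x in S, |φ (g x * c) - φ (g x * c₀)| < ε / 2 :=
    (tendsto_integral_abs_comp_mul_sub_of_continuous hgm hφ hC c₀).eventually
      (gt_mem_nhds (half_pos hε))
  have hcnear : ∀ᶠ c in 𝓝 c₀, |c₀| / 2 < |c| :=
    (continuous_abs.tendsto c₀).eventually (lt_mem_nhds (half_lt_self hc₀pos))
  filter_upwards [hφnear, hcnear] with c hφc hc
  have hc0 : c ≠ 0 := abs_pos.1 ((half_pos hc₀pos).trans hc)
  have hD : ∫ y, |f y - φ y| ≤ m * |c₀| * ε / 8 := by simpa [Real.norm_eq_abs] using hφclose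
  have hDm : Measurable fun y => f y - φ y := hfm.sub hφ.measurable
  have hD₁ : ∫ x in S, |f (g x * c) - φ (g x * c)| ≤ ε / 4 := by
    have hmono : m * (|c₀| / 2) * ∫ x in S, |f (g x * c) - φ (g x * c)| ≤
        m * |c| * ∫ x in S, |f (g x * c) - φ (g x * c)| := by gcongr
    refine le_of_mul_le_mul_left ?_ (by positivity : 0 < m * (|c₀| / 2))
    linarith [mul_setIntegral_abs_comp_mul_le hS hg hinj hm0.le hm hDm (hf.sub hφi) hc0]
  have hD₂ : ∫ x in S, |f (g x * c₀) - φ (g x * c₀)| ≤ ε / 8 := by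
    refine le_of_mul_le_mul_left ?_ (by positivity : 0 < m * |c₀|)
    linarith [mul_setIntegral_abs_comp_mul_le hS hg hinj hm0.le hm hDm (hf.sub hφi) hc₀]
  have hfS := fun {c : ℝ} (hc : c ≠ 0) =>
    integrableOn_comp_mul_of_le_abs_deriv hS hg hinj hm0 hm hfm hf hc
  have hφS := fun {c : ℝ} (hc : c ≠ 0) =>
    integrableOn_comp_mul_of_le_abs_deriv hS hg hinj hm0 hm hφ.measurable hφi hc
  rw [Real.dist_eq, sub_zero, abs_of_nonneg (integral_nonneg fun x => abs_nonneg _)]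
  calc ∫ x in S, |f (g x * c) - f (g x * c₀)|
      ≤ (∫ x in S, |f (g x * c) - φ (g x * c)|) + (∫ x in S, |φ (g x * c) - φ (g x * c₀)|)
          + ∫ x in S, |f (g x * c₀) - φ (g x * c₀)| :=
        integral_abs_sub_le_add_add (hfS hc0) (hfS hc₀) (hφS hc0) (hφS hc₀)
    _ < ε := by linarith

end ChangeOfVariables

/-- Let `a` be bounded measurable, `h : [0,1] → [0,1]` continuous, and `g : [0,1] → [0,1]`
a `C¹` map with nowhere-vanishing derivative.  Then
`G(s) = ∫₀¹ |a(g(t)·h(s)) − a(g(t)·h(s₀))| dt` is continuous at every `s₀ ∈ [0,1]`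
with `h(s₀) ≠ 0`. -/
theorem stmt7 (a : ℝ → ℝ) (ha : Measurable a) (M : ℝ) (haM : ∀ t, |a t| ≤ M)
    (h : ℝ → ℝ) (hh : ContinuousOn h (Icc 0 1)) (hhmap : MapsTo h (Icc 0 1) (Icc 0 1))
    (g g' : ℝ → ℝ)
    (hg : ∀ t ∈ Icc (0 : ℝ) 1, HasDerivAt g (g' t) t)
    (hg' : ContinuousOn g' (Icc 0 1))
    (hg'0 : ∀ t ∈ Icc (0 : ℝ) 1, g' t ≠ 0)
    (hgmap : MapsTo g (Icc 0 1) (Icc 0 1))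
    (s₀ : ℝ) (hs₀ : s₀ ∈ Icc (0 : ℝ) 1) (hs₀0 : h s₀ ≠ 0) :
    ContinuousWithinAt
      (fun s => ∫ t in (0 : ℝ)..1, |a (g t * h s) - a (g t * h s₀)|) (Icc 0 1) s₀ := by
  obtain ⟨t₁, ht₁, hmin⟩ := isCompact_Icc.exists_isMinOn (nonempty_Icc.2 zero_le_one) hg'.abs
  have hinj : InjOn g (Ioc 0 1) :=
    (ordConnected_Icc.injOn_of_hasDerivAt_ne_zero hg hg'0).mono Ioc_subset_Icc_self
  -- `a` is only ever evaluated on `[0, 1]`, so it may be replaced by an integrable function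
  set f : ℝ → ℝ := (Icc (-1 : ℝ) 1).indicator a
  have hf : Integrable f :=
    (Measure.integrableOn_of_bounded (by simp) ha.aestronglyMeasurable
      (Eventually.of_forall haM)).integrable_indicator measurableSet_Icc
  have hfa : ∀ t ∈ Icc (0 : ℝ) 1, ∀ s ∈ Icc (0 : ℝ) 1, a (g t * h s) = f (g t * h s) :=
    fun t ht s hs => (indicator_of_mem (Icc_subset_Icc_left (by norm_num)
      (unitInterval.mul_mem (hgmap ht) (hhmap hs))) a).symm
  have hL1 := tendsto_setIntegral_abs_comp_mul_sub measurableSet_Ioc (by simp)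
    (fun t ht => (hg t (Ioc_subset_Icc_self ht)).hasDerivWithinAt) hinj
    (abs_pos.2 (hg'0 t₁ ht₁)) (fun t ht => hmin (Ioc_subset_Icc_self ht))
    (ha.indicator measurableSet_Icc) hf hs₀0
  have hG₀ : ∫ t in (0 : ℝ)..1, |a (g t * h s₀) - a (g t * h s₀)| = 0 := by simp
  rw [ContinuousWithinAt, hG₀]
  refine (hL1.comp (hh s₀ hs₀)).congr' (eventually_nhdsWithin_of_forall fun s hs => ?_)
  simp only [Function.comp_apply, intervalIntegral.integral_of_le zero_le_one]
  refine setIntegral_congr_fun measurableSet_Ioc fun t ht => ?_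
  rw [hfa t (Ioc_subset_Icc_self ht) s hs, hfa t (Ioc_subset_Icc_self ht) s₀ hs₀]
end

section
/- Let P be a metric space, f : ℝ × P → ℝ^m a bounded map uniformly regular w.r.t. p ∈ P at 0, and h : P → ℝ a continuous function. Then the map (s,p) ↦ h(p)·f(s,p) is uniformly regular w.r.t. p ∈ P at 0. -/
/-!
Everything follows from `a • x - b • y = a • (x - y) + (a - b) • y`. For `a = b = h p` the mean
oscillation of `h • f` at `p` is `|h p|` times that of `f`, and `|h|` is locally bounded. For
`a = h p`, `b = h p₀` the `L¹([0, t₀])` distance between `h p • f · p` and `h p₀ • f · p₀` is at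
most `|h p|` times that of `f` plus `|h p - h p₀| * M * t₀`; on a compact `K` the first term is
small because `|h|` is bounded on `K`, the second because `h` is continuous.
-/

open MeasureTheory

/-- `f : ℝ × P → ℝ^m` (curried) is *uniformly regular with respect to `p ∈ P` at `0`* if:
(1) `t ↦ f t p` is measurable for each `p`;
(2) `(1/|t|)·∫₀ᵗ ‖f s p − f 0 p‖ ds → 0` as `t → 0`, locally uniformly in `p`;
(3) `p ↦ f 0 p` is continuous;
(4) for every compact `K ⊆ P` there is `t₀ > 0` such that `p ↦ (s ↦ f s p)` is continuous
from `K` into `L¹([0,t₀], ℝ^m)` (expressed via the `L¹` distance). -/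
def UniformlyRegularAtZero {P : Type*} [MetricSpace P] {m : ℕ}
    (f : ℝ → P → EuclideanSpace ℝ (Fin m)) : Prop :=
  (∀ p : P, Measurable fun t => f t p) ∧
  (∀ p₀ : P, ∀ ε > 0, ∃ δ > 0, ∃ U ∈ nhds p₀, ∀ p ∈ U, ∀ t : ℝ, 0 < |t| → |t| < δ →
      |(∫ s in (0 : ℝ)..t, ‖f s p - f 0 p‖) / t| < ε) ∧
  Continuous (fun p => f 0 p) ∧
  (∀ K : Set P, IsCompact K → ∃ t₀ > 0, ∀ p₀ ∈ K, ∀ ε > 0, ∃ δ > 0,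
      ∀ p ∈ K, dist p p₀ < δ → (∫ s in (0 : ℝ)..t₀, ‖f s p - f s p₀‖) < ε)

open Filter Topology

section

variable {E : Type*} [NormedAddCommGroup E]

def MeanOscillationTendstoZeroLocallyUniformly {P : Type*} [TopologicalSpace P]
    (f : ℝ → P → E) : Prop :=
  ∀ p₀ : P, ∀ ε > 0, ∃ δ > 0, ∃ U ∈ 𝓝 p₀, ∀ p ∈ U, ∀ t : ℝ, 0 < |t| → |t| < δ →
    |(∫ s in (0 : ℝ)..t, ‖f s p - f 0 p‖) / t| < ε

def ContinuousIntoL1OnCompacts {P : Type*} [PseudoMetricSpace P] (f : ℝ → P → E) : Prop :=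
  ∀ K : Set P, IsCompact K → ∃ t₀ > 0, ∀ p₀ ∈ K, ∀ ε > 0, ∃ δ > 0,
    ∀ p ∈ K, dist p p₀ < δ → (∫ s in (0 : ℝ)..t₀, ‖f s p - f s p₀‖) < ε

lemma intervalIntegrable_of_norm_le {g : ℝ → E} (hg : AEStronglyMeasurable g volume) {C : ℝ}
    (hC : ∀ s, ‖g s‖ ≤ C) (a b : ℝ) : IntervalIntegrable g volume a b :=
  intervalIntegrable_iff.2 <|
    Measure.integrableOn_of_bounded measure_Ioc_lt_top.ne hg (ae_of_all _ hC)

variable [NormedSpace ℝ E]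

lemma norm_smul_sub_smul_le (a b : ℝ) (x y : E) :
    ‖a • x - b • y‖ ≤ |a| * ‖x - y‖ + |a - b| * ‖y‖ := by
  have hsplit : a • x - b • y = a • (x - y) + (a - b) • y := by
    rw [smul_sub, sub_smul]; abel
  rw [hsplit, ← Real.norm_eq_abs, ← Real.norm_eq_abs, ← norm_smul, ← norm_smul]
  exact norm_add_le _ _

lemma intervalIntegral.integral_norm_smul_sub_smul (c : ℝ) (u v : ℝ → E) (a b : ℝ) :
    ∫ s in a..b, ‖c • u s - c • v s‖ = |c| * ∫ s in a..b, ‖u s - v s‖ := by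
  simp_rw [← smul_sub, norm_smul, Real.norm_eq_abs, intervalIntegral.integral_const_mul]

lemma intervalIntegral.integral_norm_smul_sub_smul_le {u v : ℝ → E}
    (hu : AEStronglyMeasurable u volume) (hv : AEStronglyMeasurable v volume) {M : ℝ}
    (hMu : ∀ s, ‖u s‖ ≤ M) (hMv : ∀ s, ‖v s‖ ≤ M) (a b : ℝ) {t : ℝ} (ht : 0 ≤ t) :
    ∫ s in (0 : ℝ)..t, ‖a • u s - b • v s‖
      ≤ |a| * (∫ s in (0 : ℝ)..t, ‖u s - v s‖) + |a - b| * M * t := by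
  have hdiff : IntervalIntegrable (fun s => ‖u s - v s‖) volume 0 t :=
    intervalIntegrable_of_norm_le (hu.sub hv).norm (C := M + M)
      (fun s => by simpa using (norm_sub_le _ _).trans (add_le_add (hMu s) (hMv s))) 0 t
  have hlhs : IntervalIntegrable (fun s => ‖a • u s - b • v s‖) volume 0 t :=
    intervalIntegrable_of_norm_le ((hu.const_smul a).sub (hv.const_smul b)).norm
      (C := |a| * M + |b| * M) (fun s => by
        rw [norm_norm]
        refine (norm_sub_le _ _).trans ?_
        simp only [Pi.smul_apply, norm_smul, Real.norm_eq_abs]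
        gcongr
        exacts [hMu s, hMv s]) 0 t
  calc ∫ s in (0 : ℝ)..t, ‖a • u s - b • v s‖
      ≤ ∫ s in (0 : ℝ)..t, (|a| * ‖u s - v s‖ + |a - b| * M) :=
        integral_mono_on ht hlhs ((hdiff.const_mul _).add intervalIntegrable_const)
          fun s _ => (norm_smul_sub_smul_le a b _ _).trans (by gcongr; exact hMv s)
    _ = |a| * (∫ s in (0 : ℝ)..t, ‖u s - v s‖) + |a - b| * M * t := by
        rw [integral_add (hdiff.const_mul _) intervalIntegrable_const, integral_const_mul,
          integral_const]
        simp only [sub_zero, smul_eq_mul]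
        ring

variable {P : Type*}

lemma MeanOscillationTendstoZeroLocallyUniformly.smul [TopologicalSpace P] {f : ℝ → P → E}
    (hf : MeanOscillationTendstoZeroLocallyUniformly f) {h : P → ℝ} (hh : Continuous h) :
    MeanOscillationTendstoZeroLocallyUniformly fun t p => h p • f t p := by
  intro p₀ ε hε
  set C := |h p₀| + 1
  have hC : 0 < C := by positivity
  obtain ⟨δ, hδ, U, hU, hUε⟩ := hf p₀ (ε / C) (by positivity)
  have hhC : ∀ᶠ p in 𝓝 p₀, |h p| < C :=
    hh.abs.continuousAt.eventually (gt_mem_nhds (lt_add_one _))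
  refine ⟨δ, hδ, U ∩ {p | |h p| < C}, inter_mem hU hhC, ?_⟩
  rintro p ⟨hpU, hpC⟩ t ht htδ
  rw [intervalIntegral.integral_norm_smul_sub_smul, mul_div_assoc, abs_mul, abs_abs]
  calc |h p| * |(∫ s in (0 : ℝ)..t, ‖f s p - f 0 p‖) / t|
      ≤ C * |(∫ s in (0 : ℝ)..t, ‖f s p - f 0 p‖) / t| := by gcongr; exact hpC.le
    _ < C * (ε / C) := by gcongr; exact hUε p hpU t ht htδ
    _ = ε := mul_div_cancel₀ _ hC.ne'

lemma ContinuousIntoL1OnCompacts.smul [PseudoMetricSpace P] {f : ℝ → P → E}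
    (hf : ContinuousIntoL1OnCompacts f) (hmeas : ∀ p, AEStronglyMeasurable (f · p) volume)
    {M : ℝ} (hbdd : ∀ t p, ‖f t p‖ ≤ M) {h : P → ℝ} (hh : Continuous h) :
    ContinuousIntoL1OnCompacts fun t p => h p • f t p := by
  intro K hK
  obtain ⟨t₀, ht₀, hL1⟩ := hf K hK
  obtain ⟨C, hC₀, hC⟩ : ∃ C > 0, ∀ p ∈ K, |h p| ≤ C := by
    obtain ⟨C, hC⟩ := hK.exists_bound_of_continuousOn hh.continuousOn
    exact ⟨max C 1, by positivity, fun p hp => (hC p hp).trans (le_max_left _ _)⟩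
  refine ⟨t₀, ht₀, fun p₀ hp₀ ε hε => ?_⟩
  have hM : 0 ≤ M := (norm_nonneg _).trans (hbdd 0 p₀)
  have hMt : 0 < M * t₀ + 1 := by positivity
  obtain ⟨δ₁, hδ₁, hfδ⟩ := hL1 p₀ hp₀ (ε / (2 * C)) (by positivity)
  obtain ⟨δ₂, hδ₂, hhδ⟩ := Metric.continuous_iff.1 hh p₀ (ε / (2 * (M * t₀ + 1))) (by positivity)
  refine ⟨min δ₁ δ₂, lt_min hδ₁ hδ₂, fun p hp hdist => ?_⟩
  have hfp : ∫ s in (0 : ℝ)..t₀, ‖f s p - f s p₀‖ < ε / (2 * C) :=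
    hfδ p hp (hdist.trans_le (min_le_left _ _))
  have hhp : |h p - h p₀| < ε / (2 * (M * t₀ + 1)) := by
    simpa only [Real.dist_eq] using hhδ p (hdist.trans_le (min_le_right _ _))
  have hI : 0 ≤ ∫ s in (0 : ℝ)..t₀, ‖f s p - f s p₀‖ :=
    intervalIntegral.integral_nonneg ht₀.le fun s _ => norm_nonneg _
  calc ∫ s in (0 : ℝ)..t₀, ‖h p • f s p - h p₀ • f s p₀‖
      ≤ |h p| * (∫ s in (0 : ℝ)..t₀, ‖f s p - f s p₀‖) + |h p - h p₀| * M * t₀ :=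
        intervalIntegral.integral_norm_smul_sub_smul_le (hmeas p) (hmeas p₀)
          (hbdd · p) (hbdd · p₀) _ _ ht₀.le
    _ ≤ C * (∫ s in (0 : ℝ)..t₀, ‖f s p - f s p₀‖) + |h p - h p₀| * (M * t₀ + 1) := by
        rw [mul_assoc]; gcongr
        · exact hC p hp
        · linarith
    _ < C * (ε / (2 * C)) + ε / (2 * (M * t₀ + 1)) * (M * t₀ + 1) := by gcongr
    _ = ε := by field_simp; ring

end

/-- Multiplying a bounded uniformly regular map by a continuous function of the parameter
preserves uniform regularity. -/
theorem stmt10 {P : Type*} [MetricSpace P] {m : ℕ}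
    (f : ℝ → P → EuclideanSpace ℝ (Fin m))
    (hf : UniformlyRegularAtZero f)
    (M : ℝ) (hbdd : ∀ (t : ℝ) (p : P), ‖f t p‖ ≤ M)
    (h : P → ℝ) (hh : Continuous h) :
    UniformlyRegularAtZero (fun t p => h p • f t p) := by
  obtain ⟨hmeas, hosc, hcont, hL1⟩ := hf
  exact ⟨fun p => (hmeas p).const_smul (h p),
    MeanOscillationTendstoZeroLocallyUniformly.smul hosc hh,
    hh.smul hcont,
    ContinuousIntoL1OnCompacts.smul hL1 (fun p => (hmeas p).aestronglyMeasurable) hbdd hh⟩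
end

section
/- Let P, Q be metric spaces, f : ℝ × P → ℝ^m bounded and uniformly regular w.r.t. p ∈ P at 0, and G : ℝ^m × ℝ × P × Q → ℝ^m continuous. Then the composition (s, p, q) ↦ G(f(s,p), s, p, q) is uniformly regular w.r.t. (p,q) ∈ P × Q at s = 0. -/
/-!
The values `f s p` stay in the compact ball `‖x‖ ≤ M`. A continuous `G` on a compact set is
uniformly continuous and bounded, so `‖G z - G z'‖ ≤ ε + c · dist z z'`: close points by uniform
continuity, distant ones by the bound. By the tube lemma the same estimate holds, uniformly on the
ball, for parameters near a given one. Integrating it in `s` controls the mean oscillation at `0`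
and the `L¹` modulus of continuity of the composition by those of `f`, up to `ε`.
-/

open MeasureTheory

open Set Filter Topology Metric Interval

theorem IsCompact.exists_norm_sub_le_add_mul_dist {Z F : Type*} [PseudoMetricSpace Z]
    [SeminormedAddCommGroup F] {T : Set Z} (hT : IsCompact T) {g : Z → F}
    (hg : ContinuousOn g T) {ε : ℝ} (hε : 0 < ε) :
    ∃ c ≥ 0, ∀ z ∈ T, ∀ z' ∈ T, ‖g z - g z'‖ ≤ ε + c * dist z z' := by
  obtain ⟨η, hη, hclose⟩ :=
    Metric.uniformContinuousOn_iff.1 (hT.uniformContinuousOn_of_continuous hg) ε hε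
  obtain ⟨C, hC⟩ := hT.exists_bound_of_continuousOn hg
  refine ⟨2 * max C 0 / η, by positivity, fun z hz z' hz' => ?_⟩
  have hcd : 0 ≤ 2 * max C 0 / η * dist z z' := by positivity
  rcases lt_or_ge (dist z z') η with hzz' | hzz'
  · linarith [dist_eq_norm (g z) (g z') ▸ hclose z hz z' hz' hzz']
  · calc ‖g z - g z'‖ ≤ ‖g z‖ + ‖g z'‖ := norm_sub_le _ _
      _ ≤ 2 * max C 0 := by linarith [hC z hz, hC z' hz', le_max_left C 0]
      _ = 2 * max C 0 / η * η := by field_simp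
      _ ≤ 2 * max C 0 / η * dist z z' := by gcongr
      _ ≤ ε + 2 * max C 0 / η * dist z z' := by linarith

theorem IsCompact.exists_mem_nhds_norm_sub_le_add_mul_dist {X Y F : Type*}
    [PseudoMetricSpace X] [TopologicalSpace Y] [SeminormedAddCommGroup F] {K : Set X}
    (hK : IsCompact K) {G : X × Y → F} (hG : Continuous G) (y₀ : Y) {ε : ℝ} (hε : 0 < ε) :
    ∃ c ≥ 0, ∃ V ∈ 𝓝 y₀, ∀ x ∈ K, ∀ x' ∈ K, ∀ y ∈ V, ∀ y' ∈ V,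
      ‖G (x, y) - G (x', y')‖ ≤ ε + c * dist x x' := by
  obtain ⟨c, hc, hGy₀⟩ := hK.exists_norm_sub_le_add_mul_dist (g := fun x => G (x, y₀))
    (by fun_prop) (div_pos hε three_pos)
  obtain ⟨V, hV, hVK⟩ := hK.mem_uniformity_of_prod (f := fun y x => G (x, y)) (s := univ)
    (hG.comp continuous_swap).continuousOn (mem_univ y₀)
    (dist_mem_uniformity (div_pos hε three_pos))
  refine ⟨c, hc, V, nhdsWithin_univ y₀ ▸ hV, fun x hx x' hx' y hy y' hy' => ?_⟩
  have h₁ : dist (G (x, y)) (G (x, y₀)) < ε / 3 := hVK y hy x hx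
  have h₂ : dist (G (x', y')) (G (x', y₀)) < ε / 3 := hVK y' hy' x' hx'
  have h₀ := hGy₀ x hx x' hx'
  rw [← dist_eq_norm] at h₀ ⊢
  linarith [dist_triangle4 (G (x, y)) (G (x, y₀)) (G (x', y₀)) (G (x', y')),
    dist_comm (G (x', y')) (G (x', y₀))]

theorem abs_intervalIntegral_le_mul_add_mul {φ ψ : ℝ → ℝ} {a b k c : ℝ} (hc : 0 ≤ c)
    (hψ : IntervalIntegrable ψ volume a b) (hφ : ∀ s ∈ Ι a b, 0 ≤ φ s)
    (hle : ∀ s ∈ Ι a b, φ s ≤ k + c * ψ s) :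
    |∫ s in a..b, φ s| ≤ k * |b - a| + c * |∫ s in a..b, ψ s| := by
  rw [intervalIntegral.abs_integral_eq_abs_integral_uIoc,
    intervalIntegral.abs_integral_eq_abs_integral_uIoc ψ,
    abs_of_nonneg (setIntegral_nonneg measurableSet_uIoc hφ)]
  have hk : IntegrableOn (fun _ => k) (Ι a b) := integrableOn_const measure_Ioc_lt_top.ne
  calc ∫ s in Ι a b, φ s ≤ ∫ s in Ι a b, (k + c * ψ s) :=
        integral_mono_of_nonneg (ae_restrict_of_forall_mem measurableSet_uIoc hφ)
          (hk.add (hψ.def'.const_mul c)) (ae_restrict_of_forall_mem measurableSet_uIoc hle)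
    _ = k * |b - a| + c * ∫ s in Ι a b, ψ s := by
        rw [integral_add hk (hψ.def'.const_mul c), integral_const, integral_const_mul,
          measureReal_def, Measure.restrict_apply_univ, Real.volume_uIoc,
          ENNReal.toReal_ofReal (abs_nonneg _), smul_eq_mul, mul_comm]
    _ ≤ k * |b - a| + c * |∫ s in Ι a b, ψ s| := by gcongr; exact le_abs_self _

theorem intervalIntegrable_norm_sub_of_norm_le {E : Type*} [NormedAddCommGroup E]
    [MeasurableSpace E] [BorelSpace E] [SecondCountableTopology E] {g h : ℝ → E} {M : ℝ}
    (hg : Measurable g) (hh : Measurable h) (hgM : ∀ s, ‖g s‖ ≤ M) (hhM : ∀ s, ‖h s‖ ≤ M)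
    (a b : ℝ) : IntervalIntegrable (fun s => ‖g s - h s‖) volume a b :=
  (intervalIntegrable_const (c := M + M)).mono_fun' (hg.sub hh).norm.aestronglyMeasurable
    (ae_of_all _ fun s => by simpa using (norm_sub_le _ _).trans (add_le_add (hgM s) (hhM s)))

theorem mul_div_add_one_lt {a c : ℝ} (hc : 0 ≤ c) (ha : 0 < a) : c * (a / (c + 1)) < a := by
  rw [← mul_div_assoc, div_lt_iff₀ (by positivity)]
  nlinarith

section Composition

variable {P Q E F : Type*} [MetricSpace P] [MetricSpace Q] [NormedAddCommGroup E]
  [NormedAddCommGroup F]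

-- Conditions (2) and (4) of `UniformlyRegularAtZero`, for an arbitrary normed target.
def LocallyUniformLebesguePointAtZero (f : ℝ → P → E) : Prop :=
  ∀ p₀ : P, ∀ ε > 0, ∃ δ > 0, ∃ U ∈ 𝓝 p₀, ∀ p ∈ U, ∀ t : ℝ, 0 < |t| → |t| < δ →
    |(∫ s in (0 : ℝ)..t, ‖f s p - f 0 p‖) / t| < ε

def ContinuousInL1OnCompacts (f : ℝ → P → E) : Prop :=
  ∀ K : Set P, IsCompact K → ∃ t₀ > 0, ∀ p₀ ∈ K, ∀ ε > 0, ∃ δ > 0,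
    ∀ p ∈ K, dist p p₀ < δ → (∫ s in (0 : ℝ)..t₀, ‖f s p - f s p₀‖) < ε

variable [MeasurableSpace E] [BorelSpace E] [ProperSpace E] {f : ℝ → P → E} {M : ℝ}
  {G : E × ℝ × P × Q → F}

theorem LocallyUniformLebesguePointAtZero.comp (hf : LocallyUniformLebesguePointAtZero f)
    (hmeas : ∀ p, Measurable fun t => f t p) (hbdd : ∀ t p, ‖f t p‖ ≤ M) (hG : Continuous G) :
    LocallyUniformLebesguePointAtZero fun s (pq : P × Q) => G (f s pq.1, s, pq.1, pq.2) := by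
  rintro ⟨p₀, q₀⟩ ε hε
  obtain ⟨c, hc, V, hV, hGV⟩ :=
    (isCompact_closedBall (0 : E) M).exists_mem_nhds_norm_sub_le_add_mul_dist hG
      ((0 : ℝ), p₀, q₀) (half_pos hε)
  obtain ⟨u, hu, W, hW, huW⟩ := mem_nhds_prod_iff.1 hV
  obtain ⟨δ₂, hδ₂, hδ₂u⟩ := Metric.mem_nhds_iff.1 hu
  obtain ⟨δ₁, hδ₁, U, hU, hfU⟩ := hf p₀ (ε / 2 / (c + 1)) (by positivity)
  refine ⟨min δ₁ δ₂, lt_min hδ₁ hδ₂, Prod.fst ⁻¹' U ∩ W,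
    inter_mem (continuous_fst.continuousAt.preimage_mem_nhds hU) hW, ?_⟩
  rintro ⟨p, q⟩ ⟨hpU, hpqW⟩ t ht htδ
  have hV_of_lt {s : ℝ} (hs : |s| < δ₂) : ((s, p, q) : ℝ × P × Q) ∈ V :=
    huW ⟨hδ₂u (by simpa using hs), hpqW⟩
  have hpointwise : ∀ s ∈ Ι 0 t,
      ‖G (f s p, s, p, q) - G (f 0 p, 0, p, q)‖ ≤ ε / 2 + c * ‖f s p - f 0 p‖ := by
    intro s hs
    have hst : |s| ≤ |t| := by simpa using abs_sub_left_of_mem_uIcc (uIoc_subset_uIcc hs)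
    simpa [dist_eq_norm] using hGV _ (mem_closedBall_zero_iff.2 (hbdd s p)) _
      (mem_closedBall_zero_iff.2 (hbdd 0 p)) _ (hV_of_lt (by linarith [min_le_right δ₁ δ₂]))
      _ (hV_of_lt (by simpa using hδ₂))
  have hint := abs_intervalIntegral_le_mul_add_mul hc
    (intervalIntegrable_norm_sub_of_norm_le (hmeas p) measurable_const (hbdd · p)
      (fun _ => hbdd 0 p) 0 t) (fun _ _ => norm_nonneg _) hpointwise
  have hfpt := hfU p hpU t ht (htδ.trans_le (min_le_left _ _))
  rw [abs_div] at hfpt ⊢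
  rw [sub_zero] at hint
  calc |∫ s in (0 : ℝ)..t, ‖G (f s p, s, p, q) - G (f 0 p, 0, p, q)‖| / |t|
      ≤ (ε / 2 * |t| + c * |∫ s in (0 : ℝ)..t, ‖f s p - f 0 p‖|) / |t| := by gcongr
    _ = ε / 2 + c * (|∫ s in (0 : ℝ)..t, ‖f s p - f 0 p‖| / |t|) := by field_simp
    _ ≤ ε / 2 + c * (ε / 2 / (c + 1)) := by gcongr
    _ < ε / 2 + ε / 2 := by gcongr; exact mul_div_add_one_lt hc (half_pos hε)
    _ = ε := add_halves ε

theorem ContinuousInL1OnCompacts.comp (hf : ContinuousInL1OnCompacts f)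
    (hmeas : ∀ p, Measurable fun t => f t p) (hbdd : ∀ t p, ‖f t p‖ ≤ M) (hG : Continuous G) :
    ContinuousInL1OnCompacts fun s (pq : P × Q) => G (f s pq.1, s, pq.1, pq.2) := by
  intro K hK
  obtain ⟨t₀, ht₀, hfK⟩ := hf (Prod.fst '' K) (hK.image continuous_fst)
  refine ⟨t₀, ht₀, ?_⟩
  rintro ⟨p₀, q₀⟩ hpq₀ ε hε
  obtain ⟨c, hc, hGT⟩ := ((isCompact_closedBall (0 : E) M).prod
    (isCompact_Icc.prod hK)).exists_norm_sub_le_add_mul_dist hG.continuousOn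
    (show 0 < ε / 4 / t₀ by positivity)
  obtain ⟨δ, hδ, hfδ⟩ := hfK p₀ (mem_image_of_mem _ hpq₀) (ε / 2 / (c + 1)) (by positivity)
  refine ⟨min δ (ε / 4 / t₀ / (c + 1)), by positivity, ?_⟩
  rintro ⟨p, q⟩ hpq hdist
  set d := dist (p, q) (p₀, q₀)
  have hpointwise : ∀ s ∈ Ι 0 t₀, ‖G (f s p, s, p, q) - G (f s p₀, s, p₀, q₀)‖ ≤
      (ε / 4 / t₀ + c * d) + c * ‖f s p - f s p₀‖ := by
    intro s hs
    have hs' : s ∈ Icc 0 t₀ := Ioc_subset_Icc_self (uIoc_of_le ht₀.le ▸ hs)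
    have hz : dist ((f s p, s, p, q) : E × ℝ × P × Q) (f s p₀, s, p₀, q₀) ≤
        ‖f s p - f s p₀‖ + d := by
      rw [Prod.dist_eq, Prod.dist_eq (x := (s, p, q)), dist_self, max_eq_right dist_nonneg,
        ← dist_eq_norm]
      exact max_le_add_of_nonneg dist_nonneg dist_nonneg
    have := hGT (f s p, s, p, q) ⟨mem_closedBall_zero_iff.2 (hbdd s p), hs', hpq⟩
      (f s p₀, s, p₀, q₀) ⟨mem_closedBall_zero_iff.2 (hbdd s p₀), hs', hpq₀⟩
    nlinarith [mul_le_mul_of_nonneg_left hz hc]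
  have hint := abs_intervalIntegral_le_mul_add_mul hc
    (intervalIntegrable_norm_sub_of_norm_le (hmeas p) (hmeas p₀) (hbdd · p) (hbdd · p₀) 0 t₀)
    (fun _ _ => norm_nonneg _) hpointwise
  have hnonneg {φ : ℝ → ℝ} (hφ : ∀ s, 0 ≤ φ s) :
      |∫ s in (0 : ℝ)..t₀, φ s| = ∫ s in (0 : ℝ)..t₀, φ s :=
    abs_of_nonneg (intervalIntegral.integral_nonneg ht₀.le fun s _ => hφ s)
  rw [sub_zero, abs_of_pos ht₀, hnonneg fun _ => norm_nonneg _, hnonneg fun _ => norm_nonneg _]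
    at hint
  have hd : c * d < ε / 4 / t₀ :=
    (mul_le_mul_of_nonneg_left (hdist.le.trans (min_le_right _ _)) hc).trans_lt
      (mul_div_add_one_lt hc (by positivity))
  have hdp : dist p p₀ < δ :=
    (le_max_left _ (dist q q₀)).trans_lt (hdist.trans_le (min_le_left _ _))
  have hψ : c * ∫ s in (0 : ℝ)..t₀, ‖f s p - f s p₀‖ < ε / 2 :=
    (mul_le_mul_of_nonneg_left (hfδ p (mem_image_of_mem _ hpq) hdp).le hc).trans_lt
      (mul_div_add_one_lt hc (half_pos hε))
  calc ∫ s in (0 : ℝ)..t₀, ‖G (f s p, s, p, q) - G (f s p₀, s, p₀, q₀)‖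
      ≤ (ε / 4 / t₀ + c * d) * t₀ + c * ∫ s in (0 : ℝ)..t₀, ‖f s p - f s p₀‖ := hint
    _ < (ε / 4 / t₀ + ε / 4 / t₀) * t₀ + ε / 2 := by gcongr
    _ = ε := by field_simp; ring

end Composition

/-- Composing a bounded uniformly regular map with a continuous map
`G : ℝ^m × ℝ × P × Q → ℝ^m` preserves uniform regularity (with respect to the joint
parameter `(p,q) ∈ P × Q`). -/
theorem stmt12 {P Q : Type*} [MetricSpace P] [MetricSpace Q] {m : ℕ}
    (f : ℝ → P → EuclideanSpace ℝ (Fin m))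
    (hf : UniformlyRegularAtZero f)
    (M : ℝ) (hbdd : ∀ (t : ℝ) (p : P), ‖f t p‖ ≤ M)
    (G : EuclideanSpace ℝ (Fin m) × ℝ × P × Q → EuclideanSpace ℝ (Fin m))
    (hG : Continuous G) :
    UniformlyRegularAtZero (fun s (pq : P × Q) => G (f s pq.1, s, pq.1, pq.2)) := by
  obtain ⟨hmeas, hleb, hcont, hL1⟩ := hf
  refine ⟨fun pq => ?_, LocallyUniformLebesguePointAtZero.comp hleb hmeas hbdd hG,
    hG.comp (by fun_prop), ContinuousInL1OnCompacts.comp hL1 hmeas hbdd hG⟩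
  have hGpq : Continuous fun xs : EuclideanSpace ℝ (Fin m) × ℝ => G (xs.1, xs.2, pq.1, pq.2) :=
    by fun_prop
  exact hGpq.measurable.comp ((hmeas pq.1).prodMk measurable_id)
end
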